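/- arXiv:cs/9812008 — 4 statements merged into one kernel-verified Lean document; each statement's English description precedes it below -/
import Mathlib

section
/- Let v_1,...,v_n be a vector k-coloring of a graph G (k > 2), and let i be a vertex with v_i = e_1 = (1,0,...,0). For each neighbor j of i, let v'_j be the unit vector obtained by projecting v_j onto the coordinates 2 through n and normalizing. Then for any two adjacent neighbors j, j' of i, ⟨v'_j, v'_{j'}⟩ ≤ -1/(k-2); i.e., the induced subgraph on the neighborhood of i is vector (k-1)-colorable. -/
/-!
With `c = 1/(k-1)` and `e = v i`, the tail of `v j` is its component `v j - ⟪e, v j⟫ • e`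
orthogonal to `e`. Since `⟪e, v j⟫, ⟪e, v j'⟫ ≤ -c`, the tails `p`, `q` satisfy
`⟪p, q⟫ = ⟪v j, v j'⟫ - ⟪e, v j⟫⟪e, v j'⟫ ≤ -c(1 + c)` and `‖p‖², ‖q‖² ≤ 1 - c²`, so
`⟪p, q⟫ / (‖p‖‖q‖) ≤ -c(1 + c) / (1 - c²) = -c / (1 - c) = -1/(k-2)`.
-/

open scoped RealInnerProductSpace

/-- Projection of a vector in `ℝ^n` onto coordinates `2` through `n`
(i.e. zeroing out the first coordinate). -/
def projTail (n : ℕ) (x : EuclideanSpace ℝ (Fin n)) : EuclideanSpace ℝ (Fin n) :=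
  WithLp.toLp 2 (fun l => if (l : ℕ) = 0 then 0 else x l)

section

variable {E : Type*} [NormedAddCommGroup E] [InnerProductSpace ℝ E]

theorem real_inner_sub_inner_smul_self {e : E} (he : ‖e‖ = 1) (u w : E) :
    ⟪u - ⟪e, u⟫ • e, w - ⟪e, w⟫ • e⟫ = ⟪u, w⟫ - ⟪e, u⟫ * ⟪e, w⟫ := by
  simp only [inner_sub_left, inner_sub_right, real_inner_smul_left, real_inner_smul_right,
    real_inner_self_eq_norm_sq, he, real_inner_comm e]
  ring

theorem norm_sq_sub_inner_smul_self {e u : E} (he : ‖e‖ = 1) (hu : ‖u‖ = 1) :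
    ‖u - ⟪e, u⟫ • e‖ ^ 2 = 1 - ⟪e, u⟫ ^ 2 := by
  rw [← real_inner_self_eq_norm_sq, real_inner_sub_inner_smul_self he,
    real_inner_self_eq_norm_sq, hu]
  ring

theorem real_inner_inv_norm_smul_le {p q : E} (hp : p ≠ 0) (hq : q ≠ 0) {d M : ℝ} (hd : 0 ≤ d)
    (hpq : ⟪p, q⟫ ≤ -d) (hM : ‖p‖ * ‖q‖ ≤ M) :
    ⟪‖p‖⁻¹ • p, ‖q‖⁻¹ • q⟫ ≤ -d / M := by
  have hpos : 0 < ‖p‖ * ‖q‖ := by positivity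
  rw [real_inner_smul_left, real_inner_smul_right, ← mul_assoc, ← mul_inv, inv_mul_eq_div,
    div_le_iff₀ hpos]
  calc ⟪p, q⟫ ≤ -d := hpq
    _ ≤ -d / M * (‖p‖ * ‖q‖) := by
      rw [neg_div, neg_mul, neg_le_neg_iff, div_mul_eq_mul_div, div_le_iff₀ (hpos.trans_le hM)]
      exact mul_le_mul_of_nonneg_left hM hd

theorem real_inner_normalized_orthogonal_le {e u w : E} (he : ‖e‖ = 1) (hu : ‖u‖ = 1)
    (hw : ‖w‖ = 1) {c : ℝ} (hc : 0 < c) (heu : ⟪e, u⟫ ≤ -c) (hew : ⟪e, w⟫ ≤ -c)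
    (huw : ⟪u, w⟫ ≤ -c) (hp : u - ⟪e, u⟫ • e ≠ 0) (hq : w - ⟪e, w⟫ • e ≠ 0) :
    ⟪‖u - ⟪e, u⟫ • e‖⁻¹ • (u - ⟪e, u⟫ • e), ‖w - ⟪e, w⟫ • e‖⁻¹ • (w - ⟪e, w⟫ • e)⟫ ≤
      -c / (1 - c) := by
  have hinner : ⟪u - ⟪e, u⟫ • e, w - ⟪e, w⟫ • e⟫ ≤ -(c * (1 + c)) := by
    rw [real_inner_sub_inner_smul_self he]
    nlinarith
  have hnorm_sq : ∀ x : E, ‖x‖ = 1 → ⟪e, x⟫ ≤ -c → ‖x - ⟪e, x⟫ • e‖ ^ 2 ≤ 1 - c ^ 2 := by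
    intro x hx hex
    rw [norm_sq_sub_inner_smul_self he hx]
    nlinarith
  have hnorm : ‖u - ⟪e, u⟫ • e‖ * ‖w - ⟪e, w⟫ • e‖ ≤ (1 - c) * (1 + c) := by
    nlinarith [hnorm_sq u hu heu, hnorm_sq w hw hew,
      sq_nonneg (‖u - ⟪e, u⟫ • e‖ - ‖w - ⟪e, w⟫ • e‖)]
  calc _ ≤ -(c * (1 + c)) / ((1 - c) * (1 + c)) :=
        real_inner_inv_norm_smul_le hp hq (by positivity) hinner hnorm
    _ = -c / (1 - c) := by rw [← neg_mul, mul_div_mul_right _ _ (by positivity)]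

end

theorem projTail_eq_sub_inner_smul {n : ℕ} {e : EuclideanSpace ℝ (Fin n)}
    (he : ∀ l : Fin n, e l = if (l : ℕ) = 0 then 1 else 0) (x : EuclideanSpace ℝ (Fin n)) :
    projTail n x = x - ⟪e, x⟫ • e := by
  ext l
  by_cases hl : (l : ℕ) = 0
  · have hinner : ⟪e, x⟫ = x l := by
      rw [PiLp.inner_apply, Finset.sum_eq_single l]
      · simp [he, hl]
      · intro m _ hm
        simp [he, show (m : ℕ) ≠ 0 from fun h => hm (Fin.ext (h.trans hl.symm))]
      · simp
    simp [projTail, he, hl, hinner]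
  · simp [projTail, he, hl]

theorem neighborhood_vector_coloring (n : ℕ) (k : ℝ) (hk : 2 < k)
    (G : SimpleGraph (Fin n)) (v : Fin n → EuclideanSpace ℝ (Fin n))
    (hunit : ∀ i, ‖v i‖ = 1)
    (hvc : ∀ i j, G.Adj i j → ⟪v i, v j⟫ ≤ -1 / (k - 1))
    (i : Fin n) (hvi : ∀ l : Fin n, v i l = if (l : ℕ) = 0 then 1 else 0)
    (v' : Fin n → EuclideanSpace ℝ (Fin n))
    (hv' : ∀ j, v' j = ‖projTail n (v j)‖⁻¹ • projTail n (v j)) :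
    ∀ j j', G.Adj i j → G.Adj i j' → G.Adj j j' →
      projTail n (v j) ≠ 0 → projTail n (v j') ≠ 0 →
      ⟪v' j, v' j'⟫ ≤ -1 / (k - 2) := by
  intro j j' hij hij' hjj' hpj hpj'
  have htail := projTail_eq_sub_inner_smul hvi
  have hvc' : ∀ i j, G.Adj i j → ⟪v i, v j⟫ ≤ -(1 / (k - 1)) := by
    simpa only [neg_div] using hvc
  rw [htail] at hpj hpj'
  rw [hv', hv', htail, htail]
  calc _ ≤ -(1 / (k - 1)) / (1 - 1 / (k - 1)) :=
        real_inner_normalized_orthogonal_le (hunit i) (hunit j) (hunit j')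
          (one_div_pos.mpr (by linarith)) (hvc' i j hij) (hvc' i j' hij') (hvc' j j' hjj')
          hpj hpj'
    _ = -1 / (k - 2) := by
      have hk1 : k - 1 ≠ 0 := by linarith
      rw [one_sub_div hk1, ← neg_div, div_div_div_cancel_right₀ hk1]
      ring
end

section
/- Let v_1, v_2 be unit vectors in ℝ^n with ⟨v_1, v_2⟩ ≤ -1/(k-1) for real k > 2, let r be a vector of i.i.d. standard normals, and c > 0. Then P(⟨v_1, r⟩ ≥ c and ⟨v_2, r⟩ ≥ c) ≤ N(ac), where a = sqrt(2(k-1)/(k-2)) and N is the standard normal upper tail. -/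
open MeasureTheory ProbabilityTheory
open scoped RealInnerProductSpace NNReal

/-!
If both projections ⟨v₁, r⟩ and ⟨v₂, r⟩ are at least c, then ⟨v₁ + v₂, r⟩ ≥ 2c. This projection is
a centred Gaussian with standard deviation ‖v₁ + v₂‖, and the obtuse angle between the unit vectors
forces ‖v₁ + v₂‖ ≤ 2 / a, so the event has probability at most N(2c / ‖v₁ + v₂‖) ≤ N(ac).
-/

namespace ProbabilityTheory

variable {ι Ω : Type*} [MeasurableSpace Ω] {μ : Measure Ω} [IsProbabilityMeasure μ]
  {r : ι → Ω → ℝ} {m : ι → ℝ} {v : ι → ℝ≥0}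

lemma map_finset_sum_mul_eq_gaussianReal (hmeas : ∀ i, Measurable (r i)) (hindep : iIndepFun r μ)
    (hdist : ∀ i, μ.map (r i) = gaussianReal (m i) (v i)) (w : ι → ℝ) (s : Finset ι) :
    μ.map (fun ω ↦ ∑ i ∈ s, w i * r i ω) =
      gaussianReal (∑ i ∈ s, w i * m i) (∑ i ∈ s, ‖w i‖₊ ^ 2 * v i) := by
  classical
  induction s using Finset.induction_on with
  | empty => simp [gaussianReal_zero_var, Measure.map_const]
  | insert i s hi ih =>
    have hindep_sum : IndepFun (fun ω ↦ w i * r i ω) (fun ω ↦ ∑ j ∈ s, w j * r j ω) μ := by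
      have := (hindep.comp (fun j x ↦ w j * x) fun j ↦ measurable_const_mul (w j))
        |>.indepFun_finsetSum_of_notMem (fun j ↦ (hmeas j).const_mul (w j)) hi
      simpa [Finset.sum_fn, Function.comp_def] using this.symm
    have hlaw_i : μ.map (fun ω ↦ w i * r i ω) = gaussianReal (w i * m i) (‖w i‖₊ ^ 2 * v i) := by
      rw [show μ.map (fun ω ↦ w i * r i ω) = (μ.map (r i)).map (w i * ·) from
        (Measure.map_map (measurable_const_mul (w i)) (hmeas i)).symm, hdist i,
        gaussianReal_map_const_mul]
      congr 1
      ext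
      simp
    simp_rw [Finset.sum_insert hi]
    exact gaussianReal_add_gaussianReal_of_indepFun hindep_sum hlaw_i ih

lemma map_sum_mul_eq_gaussianReal [Fintype ι] (hmeas : ∀ i, Measurable (r i))
    (hindep : iIndepFun r μ) (hdist : ∀ i, μ.map (r i) = gaussianReal 0 1)
    (w : EuclideanSpace ℝ ι) :
    μ.map (fun ω ↦ ∑ i, w i * r i ω) = gaussianReal 0 (‖w‖₊ ^ 2) := by
  simpa [EuclideanSpace.nnnorm_eq] using
    map_finset_sum_mul_eq_gaussianReal hmeas hindep hdist w Finset.univ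

lemma gaussianReal_Ici_le_of_mul_le {σ : ℝ≥0} {t x : ℝ} (hx : 0 < x) (h : σ * t ≤ x) :
    gaussianReal 0 (σ ^ 2) (Set.Ici x) ≤ gaussianReal 0 1 (Set.Ici t) := by
  have hlaw : gaussianReal 0 (σ ^ 2) = (gaussianReal 0 1).map ((σ : ℝ) * ·) := by
    rw [gaussianReal_map_const_mul]
    congr
    · simp
    · ext; simp
  rw [hlaw, Measure.map_apply (measurable_const_mul _) measurableSet_Ici]
  refine measure_mono fun y (hy : x ≤ σ * y) ↦ ?_
  have hσ : 0 < (σ : ℝ) := by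
    refine σ.coe_nonneg.lt_of_ne fun h0 ↦ ?_
    rw [← h0, zero_mul] at hy
    linarith
  exact (mul_le_mul_iff_right₀ hσ).mp (h.trans hy)

end ProbabilityTheory

lemma norm_add_mul_sqrt_le_two {E : Type*} [NormedAddCommGroup E] [InnerProductSpace ℝ E]
    {v₁ v₂ : E} {k : ℝ} (hk : 2 < k) (h₁ : ‖v₁‖ = 1) (h₂ : ‖v₂‖ = 1)
    (hinner : ⟪v₁, v₂⟫ ≤ -1 / (k - 1)) :
    ‖v₁ + v₂‖ * √(2 * (k - 1) / (k - 2)) ≤ 2 := by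
  have hk₁ : k - 1 ≠ 0 := by linarith
  have hk₂ : k - 2 ≠ 0 := by linarith
  have hsq : ‖v₁ + v₂‖ ^ 2 ≤ 2 * (k - 2) / (k - 1) := by
    have : 2 * (k - 2) / (k - 1) = 2 + 2 * (-1 / (k - 1)) := by field_simp; ring
    rw [norm_add_sq_real, h₁, h₂, this]
    linarith
  calc ‖v₁ + v₂‖ * √(2 * (k - 1) / (k - 2))
      = √(‖v₁ + v₂‖ ^ 2 * (2 * (k - 1) / (k - 2))) := by
        rw [Real.sqrt_mul (sq_nonneg _), Real.sqrt_sq (norm_nonneg _)]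
    _ ≤ √(2 * (k - 2) / (k - 1) * (2 * (k - 1) / (k - 2))) := by
        gcongr
        exact div_nonneg (by linarith) (by linarith)
    _ = √(2 ^ 2) := by congr 1; field_simp
    _ = 2 := Real.sqrt_sq zero_le_two

theorem both_endpoints_captured_prob_le (n : ℕ) (k : ℝ) (hk : 2 < k)
    {Ω : Type*} [MeasurableSpace Ω] (μ : Measure Ω) [IsProbabilityMeasure μ]
    (r : Fin n → Ω → ℝ) (hmeas : ∀ i, Measurable (r i))
    (hindep : iIndepFun r μ)
    (hdist : ∀ i, μ.map (r i) = gaussianReal 0 1)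
    (v₁ v₂ : EuclideanSpace ℝ (Fin n)) (h₁ : ‖v₁‖ = 1) (h₂ : ‖v₂‖ = 1)
    (hinner : ⟪v₁, v₂⟫ ≤ -1 / (k - 1))
    (c : ℝ) (hc : 0 < c) :
    μ {ω | c ≤ ∑ i, v₁ i * r i ω ∧ c ≤ ∑ i, v₂ i * r i ω} ≤
      gaussianReal 0 1 (Set.Ici (Real.sqrt (2 * (k - 1) / (k - 2)) * c)) := by
  set S : Ω → ℝ := fun ω ↦ ∑ i, (v₁ + v₂) i * r i ω
  have hsub : {ω | c ≤ ∑ i, v₁ i * r i ω ∧ c ≤ ∑ i, v₂ i * r i ω} ⊆ S ⁻¹' Set.Ici (2 * c) := by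
    rintro ω ⟨h₁ω, h₂ω⟩
    simp only [S, Set.mem_preimage, Set.mem_Ici, PiLp.add_apply, add_mul, Finset.sum_add_distrib]
    linarith
  have hnorm := norm_add_mul_sqrt_le_two hk h₁ h₂ hinner
  calc μ {ω | c ≤ ∑ i, v₁ i * r i ω ∧ c ≤ ∑ i, v₂ i * r i ω}
      ≤ μ (S ⁻¹' Set.Ici (2 * c)) := measure_mono hsub
    _ = gaussianReal 0 (‖v₁ + v₂‖₊ ^ 2) (Set.Ici (2 * c)) := by
        rw [← map_sum_mul_eq_gaussianReal hmeas hindep hdist,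
          Measure.map_apply (by fun_prop) measurableSet_Ici]
    _ ≤ _ := gaussianReal_Ici_le_of_mul_le (by positivity) <| by
        rw [coe_nnnorm, ← mul_assoc]
        nlinarith
end

section
/- Let S_1,...,S_α be an antichain of subsets of an m-element universe such that |S_i ∩ S_j| ≥ t for all i, j. Then α ≤ C(m, ⌈(m+t)/2⌉); in particular, when m + t is odd, α ≤ C(m, (m+t+1)/2). -/
open Finset
open scoped FinsetFamily


def MyShifted (𝒜 : Finset (Finset ℕ)) : Prop :=
  ∀ A ∈ 𝒜, ∀ j ∈ A, ∀ i < j, i ∉ A → insert i (A.erase j) ∈ 𝒜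

def MyInter (𝒜 : Finset (Finset ℕ)) : Prop :=
  ∀ A ∈ 𝒜, ∀ B ∈ 𝒜, (A ∩ B).Nonempty


lemma myLocalLYM {𝒜 : Finset (Finset ℕ)} {n r : ℕ}
    (hsized : ∀ A ∈ 𝒜, A.card = r) (hsub : ∀ A ∈ 𝒜, A ⊆ Finset.range n) :
    𝒜.card * r ≤ (∂ 𝒜).card * (n - r + 1) := by
  classical
  refine card_mul_le_card_mul' (· ⊆ ·) (fun A hA => ?_) (fun B hB => ?_)
  · rw [← hsized A hA, ← card_image_of_injOn A.erase_injOn]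
    refine card_le_card ?_
    simp_rw [image_subset_iff, mem_bipartiteBelow]
    exact fun a ha => ⟨erase_mem_shadow hA ha, erase_subset _ _⟩
  · obtain ⟨A₀, hA₀, a₀, ha₀, rfl⟩ := mem_shadow_iff.1 hB
    have hBcard : (A₀.erase a₀).card = r - 1 := by
      rw [card_erase_of_mem ha₀, hsized A₀ hA₀]
    have hBsub : A₀.erase a₀ ⊆ Finset.range n := (erase_subset _ _).trans (hsub A₀ hA₀)
    set B := A₀.erase a₀ with hBdef
    refine le_trans (le_trans (card_le_card ?_) (card_image_le (s := Finset.range n \ B) (f := fun a => insert a B))) ?_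
    · intro A hA
      rw [mem_bipartiteAbove] at hA
      obtain ⟨hA1, hA2⟩ := hA
      have : ∃ a ∉ B, insert a B = A := by
        rw [exists_eq_insert_iff]
        constructor
        · exact hA2
        · rw [hBcard, hsized A hA1]
          have : 1 ≤ r := by
            rcases Nat.eq_zero_or_pos r with h | h
            · exfalso
              have := hsized A₀ hA₀
              rw [h, card_eq_zero] at this
              exact absurd (this ▸ ha₀) (notMem_empty a₀)
            · exact h
          omega
      obtain ⟨a, haB, rfl⟩ := this
      refine mem_image_of_mem _ (mem_sdiff.2 ⟨?_, haB⟩)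
      exact (hsub _ hA1) (mem_insert_self a B)
    · rw [card_sdiff_of_subset hBsub, card_range, hBcard]
      exact le_trans tsub_tsub_le_tsub_add le_rfl

lemma katona_small {𝒜 : Finset (Finset ℕ)} {k : ℕ} (hk : k ≤ 1)
    (hsized : ∀ A ∈ 𝒜, A.card = k) (hint : MyInter 𝒜) :
    𝒜.card ≤ (∂ 𝒜).card := by
  rcases 𝒜.eq_empty_or_nonempty with rfl | ⟨A₀, hA₀⟩
  · simp
  interval_cases k
  · exfalso
    have h0 := hsized A₀ hA₀
    rw [card_eq_zero] at h0
    obtain ⟨x, hx⟩ := hint A₀ hA₀ A₀ hA₀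
    rw [h0] at hx; simp at hx
  · have h1 : 𝒜.card ≤ 1 := by
      rw [card_le_one]
      intro A hA B hB
      obtain ⟨x, hx⟩ := hint A hA B hB
      rw [mem_inter] at hx
      have hAx : A = {x} := by
        rw [eq_singleton_iff_unique_mem]
        refine ⟨hx.1, fun y hy => ?_⟩
        have := hsized A hA
        rw [card_eq_one] at this
        obtain ⟨a, rfl⟩ := this
        simp at hy hx ⊢; omega
      have hBx : B = {x} := by
        rw [eq_singleton_iff_unique_mem]
        refine ⟨hx.2, fun y hy => ?_⟩
        have := hsized B hB
        rw [card_eq_one] at this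
        obtain ⟨a, rfl⟩ := this
        simp at hy hx ⊢; omega
      rw [hAx, hBx]
    refine h1.trans ?_
    rw [Nat.one_le_iff_ne_zero, ← Nat.pos_iff_ne_zero, card_pos]
    have := hsized A₀ hA₀
    rw [card_eq_one] at this
    obtain ⟨a, rfl⟩ := this
    exact ⟨∅, by simpa using erase_mem_shadow hA₀ (mem_singleton_self a)⟩

lemma katona_shifted : ∀ (n : ℕ) (𝒜 : Finset (Finset ℕ)) (k : ℕ),
    (∀ A ∈ 𝒜, A.card = k) → (∀ A ∈ 𝒜, A ⊆ Finset.range n) →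
    MyShifted 𝒜 → MyInter 𝒜 → 𝒜.card ≤ (∂ 𝒜).card := by
  intro n
  induction n with
  | zero =>
    intro 𝒜 k hsized hsub hsh hint
    rcases 𝒜.eq_empty_or_nonempty with rfl | ⟨A₀, hA₀⟩
    · simp
    exfalso
    obtain ⟨x, hx⟩ := hint A₀ hA₀ A₀ hA₀
    rw [mem_inter] at hx
    simpa using hsub A₀ hA₀ hx.1
  | succ n ih =>
    intro 𝒜 k hsized hsub hsh hint
    rcases le_or_gt k 1 with hk1 | hk1
    · exact katona_small hk1 hsized hint
    rcases le_or_gt (n + 2) (2 * k) with hbase | hrec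
    · -- base case: ground n+1 ≤ 2k-1, use local LYM
      have h := myLocalLYM hsized hsub
      have hle : n + 1 - k + 1 ≤ k := by omega
      have : 𝒜.card * k ≤ (∂ 𝒜).card * k :=
        h.trans (Nat.mul_le_mul_left _ hle)
      exact Nat.le_of_mul_le_mul_right (c := k) (by linarith [this]) (by omega)
    · -- recursive case: n + 1 ≥ 2k
      have hn2k : 2 * k ≤ n + 1 := by omega
      set G0 := 𝒜.filter (fun A => n ∉ A) with hG0
      set G1 := (𝒜.filter (fun A => n ∈ A)).image (fun A => A.erase n) with hG1
      -- sizes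
      have hcard1 : G1.card = (𝒜.filter (fun A => n ∈ A)).card := by
        refine card_image_of_injOn ?_
        intro A hA B hB hAB
        rw [mem_coe, mem_filter] at hA hB
        simp only at hAB
        have : insert n (A.erase n) = insert n (B.erase n) := by rw [hAB]
        rwa [insert_erase hA.2, insert_erase hB.2] at this
      have hsplit : 𝒜.card = G0.card + G1.card := by
        rw [hcard1, hG0]
        rw [← card_filter_add_card_filter_not (p := fun A => n ∈ A) (s := 𝒜)]
        omega
      -- G0 properties
      have hG0sized : ∀ A ∈ G0, A.card = k := fun A hA => hsized A (mem_filter.1 hA).1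
      have hG0sub : ∀ A ∈ G0, A ⊆ Finset.range n := by
        intro A hA x hx
        rw [mem_filter] at hA
        have := hsub A hA.1 hx
        rw [mem_range] at this ⊢
        rcases Nat.lt_succ_iff_lt_or_eq.1 this with h | h
        · exact h
        · exact absurd (h ▸ hx) hA.2
      have hG0sh : MyShifted G0 := by
        intro A hA j hj i hij hiA
        rw [mem_filter] at hA
        rw [mem_filter]
        refine ⟨hsh A hA.1 j hj i hij hiA, ?_⟩
        intro hn
        rcases mem_insert.1 hn with h | h
        · have := hG0sub A (mem_filter.2 hA) hj
          rw [mem_range] at this; omega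
        · exact hA.2 (mem_of_mem_erase h)
      have hG0int : MyInter G0 := fun A hA B hB =>
        hint A (mem_filter.1 hA).1 B (mem_filter.1 hB).1
      have hIH0 : G0.card ≤ (∂ G0).card := ih G0 k hG0sized hG0sub hG0sh hG0int
      -- G1 properties
      have hG1mem : ∀ B ∈ G1, insert n B ∈ 𝒜 ∧ n ∉ B := by
        intro B hB
        rw [hG1, mem_image] at hB
        obtain ⟨A, hA, rfl⟩ := hB
        rw [mem_filter] at hA
        rw [insert_erase hA.2]
        exact ⟨hA.1, notMem_erase _ _⟩
      have hG1sized : ∀ B ∈ G1, B.card = k - 1 := by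
        intro B hB
        obtain ⟨h1, h2⟩ := hG1mem B hB
        have := hsized _ h1
        rw [card_insert_of_notMem h2] at this
        omega
      have hG1sub : ∀ B ∈ G1, B ⊆ Finset.range n := by
        intro B hB x hx
        obtain ⟨h1, h2⟩ := hG1mem B hB
        have := hsub _ h1 (mem_insert_of_mem hx)
        rw [mem_range] at this ⊢
        rcases Nat.lt_succ_iff_lt_or_eq.1 this with h | h
        · exact h
        · exact absurd (h ▸ hx) h2
      have hG1sh : MyShifted G1 := by
        intro B hB j hj i hij hiB
        obtain ⟨h1, h2⟩ := hG1mem B hB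
        have hjn : j < n := by have := hG1sub B hB hj; rwa [mem_range] at this
        have hin : i ≠ n := by omega
        have hiA : i ∉ insert n B := by
          intro h; rcases mem_insert.1 h with h | h
          · exact hin h
          · exact hiB h
        have hstep := hsh (insert n B) h1 j (mem_insert_of_mem hj) i hij hiA
        rw [hG1, mem_image]
        refine ⟨insert i ((insert n B).erase j), mem_filter.2 ⟨hstep, ?_⟩, ?_⟩
        · exact mem_insert_of_mem (mem_erase.2 ⟨by omega, mem_insert_self _ _⟩)
        · ext x
          simp only [mem_erase, mem_insert]
          constructor
          · rintro ⟨hxn, h | ⟨hxj, h | h⟩⟩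
            · exact Or.inl h
            · exact absurd h hxn
            · exact Or.inr ⟨hxj, h⟩
          · rintro (h | ⟨hxj, h⟩)
            · subst h; exact ⟨hin, Or.inl rfl⟩
            · exact ⟨fun hx => h2 (hx ▸ h), Or.inr ⟨hxj, Or.inr h⟩⟩
      have hG1int : MyInter G1 := by
        intro B1 hB1 B2 hB2
        by_contra hcon
        rw [not_nonempty_iff_eq_empty] at hcon
        obtain ⟨hA1, hn1⟩ := hG1mem B1 hB1
        obtain ⟨hA2, hn2⟩ := hG1mem B2 hB2
        have hB1ne : B1.Nonempty := by
          rw [← card_pos, hG1sized B1 hB1]; omega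
        have hne : B1 ≠ B2 := by
          rintro rfl
          rw [inter_self] at hcon
          rw [hcon] at hB1ne
          exact not_nonempty_empty hB1ne
        have hsubU : B1 ∪ B2 ⊆ Finset.range n := union_subset (hG1sub B1 hB1) (hG1sub B2 hB2)
        have hcardU : (B1 ∪ B2).card < n := by
          have hci := card_union_add_card_inter B1 B2
          rw [hcon] at hci
          have h1 := hG1sized B1 hB1
          have h2 := hG1sized B2 hB2
          simp only [card_empty, add_zero] at hci
          omega
        obtain ⟨x, hx⟩ : (Finset.range n \ (B1 ∪ B2)).Nonempty := by
          rw [← card_pos, card_sdiff_of_subset hsubU, card_range]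
          omega
        rw [mem_sdiff, mem_range, mem_union] at hx
        push_neg at hx
        have hxn : x < n := hx.1
        have hxB1 : x ∉ B1 := hx.2.1
        have hxB2 : x ∉ B2 := hx.2.2
        have hxA1 : x ∉ insert n B1 := by
          intro h
          rcases mem_insert.1 h with h | h
          · omega
          · exact hxB1 h
        have hstep := hsh _ hA1 n (mem_insert_self _ _) x hxn hxA1
        rw [erase_insert hn1] at hstep
        obtain ⟨y, hy⟩ := hint _ hstep _ hA2
        rw [mem_inter, mem_insert] at hy
        obtain ⟨hy1, hy2⟩ := hy
        rcases mem_insert.1 hy2 with rfl | hyB2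
        · rcases hy1 with rfl | h
          · omega
          · exact hn1 h
        · rcases hy1 with rfl | h
          · exact hxB2 hyB2
          · have : y ∈ B1 ∩ B2 := mem_inter.2 ⟨h, hyB2⟩
            rw [hcon] at this
            exact notMem_empty y this
      have hIH1 : G1.card ≤ (∂ G1).card :=
        ih G1 (k - 1) hG1sized hG1sub hG1sh hG1int
      -- shadow decomposition
      have hsub0 : ∂ G0 ⊆ ∂ 𝒜 := shadow_monotone (filter_subset _ _)
      have hG1shadow_sub : ∀ B ∈ ∂ G1, B ⊆ Finset.range n := by
        intro B hB
        rw [mem_shadow_iff] at hB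
        obtain ⟨C, hC, y, hy, rfl⟩ := hB
        exact (erase_subset _ _).trans (hG1sub C hC)
      have hsub1 : (∂ G1).image (insert n) ⊆ ∂ 𝒜 := by
        intro C hC
        rw [mem_image] at hC
        obtain ⟨B, hB, rfl⟩ := hC
        rw [mem_shadow_iff] at hB
        obtain ⟨C, hC, y, hy, rfl⟩ := hB
        obtain ⟨hCA, hCn⟩ := hG1mem C hC
        have hyn : y ≠ n := by
          have := hG1sub C hC hy
          rw [mem_range] at this; omega
        rw [← erase_insert_of_ne hyn.symm]
        exact erase_mem_shadow hCA (mem_insert_of_mem hy)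
      have hdisj : Disjoint (∂ G0) ((∂ G1).image (insert n)) := by
        rw [disjoint_left]
        intro C hC0 hC1
        rw [mem_image] at hC1
        obtain ⟨B, hB, rfl⟩ := hC1
        rw [mem_shadow_iff] at hC0
        obtain ⟨A, hA, y, hy, hEq⟩ := hC0
        have hnA : n ∈ A := by
          have : n ∈ A.erase y := hEq ▸ mem_insert_self n B
          exact mem_of_mem_erase this
        exact (mem_filter.1 hA).2 hnA
      have himgcard : ((∂ G1).image (insert n)).card = (∂ G1).card := by
        refine card_image_of_injOn ?_
        intro B1 hB1 B2 hB2 h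
        rw [mem_coe] at hB1 hB2
        have h1 : n ∉ B1 := fun hc => by
          have := hG1shadow_sub B1 hB1 hc; rw [mem_range] at this; omega
        have h2 : n ∉ B2 := fun hc => by
          have := hG1shadow_sub B2 hB2 hc; rw [mem_range] at this; omega
        have : (insert n B1).erase n = (insert n B2).erase n := by rw [h]
        rwa [erase_insert h1, erase_insert h2] at this
      calc 𝒜.card = G0.card + G1.card := hsplit
        _ ≤ (∂ G0).card + (∂ G1).card := add_le_add hIH0 hIH1
        _ = ((∂ G0) ∪ (∂ G1).image (insert n)).card := by
            rw [card_union_of_disjoint hdisj, himgcard]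
        _ ≤ (∂ 𝒜).card := card_le_card (union_subset hsub0 hsub1)


lemma compress_eq_of_mem {i j : ℕ} (hij : i ≠ j) {A : Finset ℕ}
    (hj : j ∈ A) (hi : i ∉ A) :
    UV.compress {i} {j} A = insert i (A.erase j) := by
  rw [UV.compress, if_pos ⟨by simpa using hi, by simpa using hj⟩]
  ext x
  simp only [mem_sdiff, sup_eq_union, mem_union, mem_singleton, mem_insert, mem_erase]
  constructor
  · rintro ⟨h | h, hxj⟩
    · exact Or.inr ⟨hxj, h⟩
    · exact Or.inl h
  · rintro (rfl | ⟨hxj, h⟩)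
    · exact ⟨Or.inr rfl, hij⟩
    · exact ⟨Or.inl h, hxj⟩

lemma compress_eq_self {i j : ℕ} {A : Finset ℕ} (h : j ∉ A ∨ i ∈ A) :
    UV.compress {i} {j} A = A := by
  rw [UV.compress, if_neg]
  rintro ⟨h1, h2⟩
  simp only [disjoint_singleton_left, singleton_subset_iff] at h1 h2
  tauto

lemma inter_compression {i j : ℕ} (hij : i ≠ j) {𝒜 : Finset (Finset ℕ)}
    (hint : MyInter 𝒜) : MyInter (UV.compression {i} {j} 𝒜) := by
  classical
  have key : ∀ A ∈ UV.compression {i} {j} 𝒜, A ∈ 𝒜 →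
      ∀ b ∈ 𝒜, UV.compress {i} {j} b ∉ 𝒜 →
      (A ∩ UV.compress {i} {j} b).Nonempty := by
    intro A hA hA𝒜 b hb hbmoved
    have hmove : j ∈ b ∧ i ∉ b := by
      by_contra h
      push_neg at h
      rw [compress_eq_self (by tauto)] at hbmoved
      exact hbmoved hb
    obtain ⟨hjb, hib⟩ := hmove
    rw [compress_eq_of_mem hij hjb hib]
    by_cases hiA : i ∈ A
    · exact ⟨i, mem_inter.2 ⟨hiA, mem_insert_self _ _⟩⟩
    by_cases hjA : j ∈ A
    · by_cases hcA : UV.compress {i} {j} A ∈ 𝒜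
      · rw [compress_eq_of_mem hij hjA hiA] at hcA
        obtain ⟨y, hy⟩ := hint _ hcA b hb
        rw [mem_inter, mem_insert] at hy
        rcases hy.1 with rfl | hyA
        · exact absurd hy.2 hib
        · refine ⟨y, mem_inter.2 ⟨(mem_of_mem_erase hyA), mem_insert_of_mem ?_⟩⟩
          exact mem_erase.2 ⟨(mem_erase.1 hyA).1, hy.2⟩
      · exfalso
        rw [UV.mem_compression] at hA
        rcases hA with ⟨_, hc⟩ | ⟨hA', _⟩
        · exact hcA hc
        · exact hA' hA𝒜
    · obtain ⟨y, hy⟩ := hint A hA𝒜 b hb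
      rw [mem_inter] at hy
      refine ⟨y, mem_inter.2 ⟨hy.1, mem_insert_of_mem (mem_erase.2 ⟨?_, hy.2⟩)⟩⟩
      rintro rfl; exact hjA hy.1
  intro A hA B hB
  have hAc := hA; have hBc := hB
  rw [UV.mem_compression] at hAc hBc
  rcases hAc with ⟨hA𝒜, _⟩ | ⟨hAn𝒜, a, ha𝒜, rfl⟩
  · rcases hBc with ⟨hB𝒜, _⟩ | ⟨hBn𝒜, b, hb𝒜, rfl⟩
    · exact hint A hA𝒜 B hB𝒜
    · by_cases hcb : UV.compress {i} {j} b ∈ 𝒜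
      · exact hint A hA𝒜 _ hcb
      · exact key A hA hA𝒜 b hb𝒜 hcb
  · rcases hBc with ⟨hB𝒜, _⟩ | ⟨hBn𝒜, b, hb𝒜, rfl⟩
    · by_cases hca : UV.compress {i} {j} a ∈ 𝒜
      · exact hint _ hca B hB𝒜
      · obtain ⟨y, hy⟩ := key B hB hB𝒜 a ha𝒜 hca
        exact ⟨y, by rw [inter_comm]; exact hy⟩
    · by_cases hca : UV.compress {i} {j} a ∈ 𝒜
      · by_cases hcb : UV.compress {i} {j} b ∈ 𝒜
        · exact hint _ hca _ hcb
        · exact key _ hA hca b hb𝒜 hcb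
      · by_cases hcb : UV.compress {i} {j} b ∈ 𝒜
        · obtain ⟨y, hy⟩ := key _ hB hcb a ha𝒜 hca
          exact ⟨y, by rw [inter_comm]; exact hy⟩
        · -- both moved: i in both
          have hma : j ∈ a ∧ i ∉ a := by
            by_contra h; push_neg at h
            rw [compress_eq_self (by tauto)] at hca
            exact hca ha𝒜
          have hmb : j ∈ b ∧ i ∉ b := by
            by_contra h; push_neg at h
            rw [compress_eq_self (by tauto)] at hcb
            exact hcb hb𝒜
          rw [compress_eq_of_mem hij hma.1 hma.2, compress_eq_of_mem hij hmb.1 hmb.2]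
          exact ⟨i, mem_inter.2 ⟨mem_insert_self _ _, mem_insert_self _ _⟩⟩


def myMeasure (𝒜 : Finset (Finset ℕ)) : ℕ := ∑ A ∈ 𝒜, ∑ x ∈ A, x

lemma measure_compression_lt {i j : ℕ} (hij : i < j) {𝒜 : Finset (Finset ℕ)}
    (hne : UV.compression {i} {j} 𝒜 ≠ 𝒜) :
    myMeasure (UV.compression {i} {j} 𝒜) < myMeasure 𝒜 := by
  classical
  set c : Finset ℕ → Finset ℕ := UV.compress {i} {j} with hc
  have hsplit : myMeasure (UV.compression {i} {j} 𝒜)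
      = ∑ A ∈ {a ∈ 𝒜 | c a ∈ 𝒜}, ∑ x ∈ A, x
        + ∑ A ∈ {a ∈ 𝒜 | c a ∉ 𝒜}, ∑ x ∈ c A, x := by
    rw [myMeasure, UV.compression, sum_union UV.compress_disjoint, filter_image,
      sum_image UV.compress_injOn]
  have hA : myMeasure 𝒜 = ∑ A ∈ {a ∈ 𝒜 | c a ∈ 𝒜}, ∑ x ∈ A, x
      + ∑ A ∈ {a ∈ 𝒜 | c a ∉ 𝒜}, ∑ x ∈ A, x := by
    rw [myMeasure, sum_filter_add_sum_filter_not]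
  rw [hsplit, hA]
  refine Nat.add_lt_add_left ?_ _
  refine sum_lt_sum_of_nonempty ?_ ?_
  · -- the moved part is nonempty
    rw [filter_nonempty_iff]
    by_contra h
    push_neg at h
    apply hne
    have h1 : {a ∈ 𝒜 | c a ∈ 𝒜} = 𝒜 := by
      rw [filter_eq_self]; exact h
    have h2 : {a ∈ 𝒜.image c | a ∉ 𝒜} = ∅ := by
      rw [filter_eq_empty_iff]
      intro a ha
      rw [mem_image] at ha
      obtain ⟨b, hb, rfl⟩ := ha
      simpa using h b hb
    rw [UV.compression, h1, h2, union_empty]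
  · intro A hA'
    rw [mem_filter] at hA'
    obtain ⟨hA𝒜, hcA⟩ := hA'
    have hmove : j ∈ A ∧ i ∉ A := by
      by_contra h
      push_neg at h
      rw [hc] at hcA
      rw [compress_eq_self (by tauto)] at hcA
      exact hcA hA𝒜
    obtain ⟨hjA, hiA⟩ := hmove
    rw [hc, compress_eq_of_mem hij.ne hjA hiA,
      sum_insert (fun h => hiA (mem_of_mem_erase h))]
    have herase : ∑ x ∈ A.erase j, x + j = ∑ x ∈ A, x := sum_erase_add _ _ hjA
    omega

lemma exists_shifted : ∀ (N : ℕ) (𝒜 : Finset (Finset ℕ)) (n k : ℕ), myMeasure 𝒜 ≤ N →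
    (∀ A ∈ 𝒜, A.card = k) → (∀ A ∈ 𝒜, A ⊆ Finset.range n) → MyInter 𝒜 →
    ∃ ℬ : Finset (Finset ℕ), (∀ A ∈ ℬ, A.card = k) ∧ (∀ A ∈ ℬ, A ⊆ Finset.range n) ∧
      MyShifted ℬ ∧ MyInter ℬ ∧ ℬ.card = 𝒜.card ∧ (∂ ℬ).card ≤ (∂ 𝒜).card := by
  intro N
  induction N with
  | zero =>
    intro 𝒜 n k hμ hsized hsub hint
    by_cases hex : ∃ p : ℕ × ℕ, p.1 < p.2 ∧ UV.compression {p.1} {p.2} 𝒜 ≠ 𝒜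
    · obtain ⟨⟨i, j⟩, hij, hne⟩ := hex
      exact absurd (measure_compression_lt hij hne) (by omega)
    · push_neg at hex
      refine ⟨𝒜, hsized, hsub, ?_, hint, rfl, le_rfl⟩
      intro A hA j hj i hij hiA
      have hcomp := hex (i, j) hij
      have := UV.compress_mem_compression (u := {i}) (v := {j}) hA
      rw [hcomp, compress_eq_of_mem hij.ne hj hiA] at this
      exact this
  | succ N ih =>
    intro 𝒜 n k hμ hsized hsub hint
    by_cases hex : ∃ p : ℕ × ℕ, p.1 < p.2 ∧ UV.compression {p.1} {p.2} 𝒜 ≠ 𝒜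
    · obtain ⟨⟨i, j⟩, hij, hne⟩ := hex
      dsimp only at hij hne
      set ℬ₀ := UV.compression {i} {j} 𝒜 with hℬ₀
      have hμ0 : myMeasure ℬ₀ ≤ N := by
        have h := measure_compression_lt hij hne
        rw [← hℬ₀] at h
        omega
      have hsized0 : ∀ A ∈ ℬ₀, A.card = k := by
        intro A hA
        rw [hℬ₀, UV.mem_compression] at hA
        rcases hA with ⟨h, _⟩ | ⟨_, b, hb, rfl⟩
        · exact hsized A h
        · rw [UV.card_compress (by simp)]
          exact hsized b hb
      have hsub0 : ∀ A ∈ ℬ₀, A ⊆ Finset.range n := by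
        intro A hA
        rw [hℬ₀, UV.mem_compression] at hA
        rcases hA with ⟨h, _⟩ | ⟨_, b, hb, rfl⟩
        · exact hsub A h
        · by_cases hm : j ∈ b ∧ i ∉ b
          · rw [compress_eq_of_mem hij.ne hm.1 hm.2]
            intro x hx
            rcases mem_insert.1 hx with rfl | hx
            · have := hsub b hb hm.1
              rw [mem_range] at this ⊢
              omega
            · exact hsub b hb (mem_of_mem_erase hx)
          · push_neg at hm
            rw [compress_eq_self (by tauto)]
            exact hsub b hb
      have hint0 : MyInter ℬ₀ := inter_compression hij.ne hint
      obtain ⟨ℬ, h1, h2, h3, h4, h5, h6⟩ := ih ℬ₀ n k hμ0 hsized0 hsub0 hint0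
      refine ⟨ℬ, h1, h2, h3, h4, ?_, ?_⟩
      · rw [h5, hℬ₀, UV.card_compression]
      · refine h6.trans ?_
        refine UV.card_shadow_compression_le _ _ ?_
        intro x hx
        rw [mem_singleton] at hx
        subst hx
        exact ⟨j, mem_singleton_self j, by simp [UV.isCompressed_self]⟩
    · push_neg at hex
      refine ⟨𝒜, hsized, hsub, ?_, hint, rfl, le_rfl⟩
      intro A hA j hj i hij hiA
      have hcomp := hex (i, j) hij
      have := UV.compress_mem_compression (u := {i}) (v := {j}) hA
      rw [hcomp, compress_eq_of_mem hij.ne hj hiA] at this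
      exact this

lemma katona_weak (𝒜 : Finset (Finset ℕ)) (n k : ℕ)
    (hsized : ∀ A ∈ 𝒜, A.card = k) (hsub : ∀ A ∈ 𝒜, A ⊆ Finset.range n)
    (hint : MyInter 𝒜) : 𝒜.card ≤ (∂ 𝒜).card := by
  obtain ⟨ℬ, h1, h2, h3, h4, h5, h6⟩ :=
    exists_shifted (myMeasure 𝒜) 𝒜 n k le_rfl hsized hsub hint
  calc 𝒜.card = ℬ.card := h5.symm
    _ ≤ (∂ ℬ).card := katona_shifted n ℬ k h1 h2 h3 h4
    _ ≤ (∂ 𝒜).card := h6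


lemma shadow_image_map {m : ℕ} (𝒜 : Finset (Finset (Fin m))) :
    ∂ (𝒜.image (fun A => A.map Fin.valEmbedding))
      = (∂ 𝒜).image (fun A => A.map Fin.valEmbedding) := by
  classical
  ext B
  simp only [mem_shadow_iff, mem_image]
  constructor
  · rintro ⟨C, ⟨A, hA, rfl⟩, y, hy, rfl⟩
    rw [mem_map] at hy
    obtain ⟨a, ha, rfl⟩ := hy
    exact ⟨A.erase a, ⟨A, hA, a, ha, rfl⟩, map_erase _ _ _⟩
  · rintro ⟨C, hC, rfl⟩
    obtain ⟨A, hA, a, ha, rfl⟩ := hC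
    exact ⟨A.map Fin.valEmbedding, ⟨A, hA, rfl⟩, Fin.valEmbedding a,
      mem_map_of_mem _ ha, (map_erase _ _ _).symm⟩

lemma katona_fin {m k : ℕ} (𝒜 : Finset (Finset (Fin m)))
    (hsized : ∀ A ∈ 𝒜, A.card = k)
    (hint : ∀ A ∈ 𝒜, ∀ B ∈ 𝒜, (A ∩ B).Nonempty) :
    𝒜.card ≤ (∂ 𝒜).card := by
  classical
  set f : Finset (Fin m) → Finset ℕ := fun A => A.map Fin.valEmbedding with hf
  have hfinj : Function.Injective f := fun A B h => Finset.map_injective _ h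
  have h1 : ∀ A ∈ 𝒜.image f, A.card = k := by
    intro A hA
    rw [mem_image] at hA
    obtain ⟨a, ha, rfl⟩ := hA
    rw [hf]; simpa using hsized a ha
  have h2 : ∀ A ∈ 𝒜.image f, A ⊆ Finset.range m := by
    intro A hA x hx
    rw [mem_image] at hA
    obtain ⟨a, ha, rfl⟩ := hA
    rw [hf] at hx
    simp only [mem_map, Fin.valEmbedding_apply] at hx
    obtain ⟨y, _, rfl⟩ := hx
    simpa using y.isLt
  have h3 : MyInter (𝒜.image f) := by
    rintro A hA B hB
    rw [mem_image] at hA hB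
    obtain ⟨a, ha, rfl⟩ := hA
    obtain ⟨b, hb, rfl⟩ := hB
    rw [hf]
    simp only
    rw [← map_inter]
    rw [map_nonempty]
    exact hint a ha b hb
  have h := katona_weak (𝒜.image f) m k h1 h2 h3
  rwa [card_image_of_injective _ hfinj, shadow_image_map,
    card_image_of_injective _ hfinj] at h

lemma katona_up {m t s : ℕ} (𝒜 : Finset (Finset (Fin m)))
    (hsized : ∀ A ∈ 𝒜, A.card = s)
    (hint : ∀ A ∈ 𝒜, ∀ B ∈ 𝒜, t ≤ (A ∩ B).card)
    (hst : 2 * s + 1 ≤ m + t) :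
    𝒜.card ≤ (∂⁺ 𝒜).card := by
  classical
  have h := katona_fin (m := m) (k := m - s) 𝒜ᶜˢ ?_ ?_
  · rwa [card_compls, shadow_compls, card_compls] at h
  · intro A hA
    rw [mem_compls] at hA
    have h1 := hsized _ hA
    have h2 : Aᶜ.card = m - A.card := by
      rw [card_compl, Fintype.card_fin]
    have h3 : A.card ≤ m := by
      simpa using card_le_univ A
    omega
  · intro A hA B hB
    rw [mem_compls] at hA hB
    have h1 := hsized _ hA
    have h2 := hsized _ hB
    have h3 := hint _ hA _ hB
    have h4 := card_union_add_card_inter Aᶜ Bᶜ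
    have h5 : (Aᶜ ∪ Bᶜ).card ≤ m := by simpa using card_le_univ (Aᶜ ∪ Bᶜ)
    have h7 : (A ∩ B)ᶜ = Aᶜ ∪ Bᶜ := compl_inf
    have h8 : ((A ∩ B)ᶜ).card = m - (A ∩ B).card := by
      rw [card_compl, Fintype.card_fin]
    have h9 : (A ∩ B).card ≤ m := by simpa using card_le_univ (A ∩ B)
    rw [h7] at h8
    rw [← card_pos]
    omega

lemma choose_anti {m k : ℕ} (hk : m ≤ 2 * k) : ∀ r, k ≤ r → Nat.choose m r ≤ Nat.choose m k := by
  intro r hr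
  induction r with
  | zero =>
    have : k = 0 := by omega
    subst this; exact le_rfl
  | succ r ih =>
    rcases Nat.lt_or_ge r k with h | h
    · have : k = r + 1 := by omega
      subst this; exact le_rfl
    · refine le_trans ?_ (ih h)
      have heq := Nat.choose_succ_right_eq m r
      have hle : m - r ≤ r + 1 := by omega
      have : Nat.choose m (r+1) * (r+1) ≤ Nat.choose m r * (r+1) := by
        rw [heq]
        exact Nat.mul_le_mul_left _ hle
      exact Nat.le_of_mul_le_mul_right this (by omega)

lemma milner_lym {m k : ℕ} (𝒜 : Finset (Finset (Fin m))) (hk : m ≤ 2 * k)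
    (hanti : IsAntichain (· ⊆ ·) (𝒜 : Set (Finset (Fin m))))
    (hcard : ∀ A ∈ 𝒜, k ≤ A.card) :
    𝒜.card ≤ m.choose k := by
  classical
  rcases Nat.eq_zero_or_pos (m.choose k) with h0 | hpos
  · have hempty : 𝒜 = ∅ := by
      rw [eq_empty_iff_forall_notMem]
      intro A hA
      have h1 := hcard A hA
      have h2 : A.card ≤ m := by simpa using card_le_univ A
      have : k ≤ m := le_trans h1 h2
      rw [Nat.choose_eq_zero_iff] at h0
      omega
    simp [hempty]
  have hlym := sum_card_slice_div_choose_le_one (𝕜 := ℚ) hanti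
  rw [Fintype.card_fin] at hlym
  have hterm : ∀ r ∈ range (m+1),
      (#(𝒜 # r) : ℚ) / (m.choose k) ≤ (#(𝒜 # r) : ℚ) / (m.choose r) := by
    intro r hr
    rcases (𝒜 # r).eq_empty_or_nonempty with he | ⟨A, hA⟩
    · rw [he]; simp
    · have hmem := mem_slice.1 hA
      have hkr : k ≤ r := hmem.2 ▸ hcard A hmem.1
      have hrm : r ≤ m := by
        rw [← hmem.2]; simpa using card_le_univ A
      refine div_le_div_of_nonneg_left (by positivity) ?_ ?_
      · exact_mod_cast Nat.choose_pos hrm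
      · exact_mod_cast choose_anti hk r hkr
  have hIic : Iic m = range (m+1) := by
    ext x; simp [Nat.lt_succ_iff]
  have hslice : ∑ r ∈ range (m+1), #(𝒜 # r) = #𝒜 := by
    rw [← hIic]
    have := sum_card_slice (𝒜 := 𝒜)
    rwa [Fintype.card_fin] at this
  have hsum : (#𝒜 : ℚ) / (m.choose k) ≤ 1 := by
    calc (#𝒜 : ℚ) / (m.choose k)
        = ∑ r ∈ range (m+1), (#(𝒜 # r) : ℚ) / (m.choose k) := by
          rw [← sum_div]
          congr 1
          norm_cast
          exact hslice.symm
      _ ≤ ∑ r ∈ range (m+1), (#(𝒜 # r) : ℚ) / (m.choose r) := sum_le_sum hterm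
      _ ≤ 1 := hlym
  rw [div_le_one (by exact_mod_cast hpos)] at hsum
  exact_mod_cast hsum


lemma milner_family (m t : ℕ) : ∀ (d : ℕ) (𝒜 : Finset (Finset (Fin m))),
    (∀ A ∈ 𝒜, ∀ B ∈ 𝒜, t ≤ (A ∩ B).card) →
    (∀ A ∈ 𝒜, ∀ B ∈ 𝒜, A ⊆ B → A = B) →
    (∀ A ∈ 𝒜, (m + t + 1) / 2 - d ≤ A.card) →
    𝒜.card ≤ m.choose ((m + t + 1) / 2) := by
  classical
  intro d
  induction d with
  | zero =>
    intro 𝒜 hint hanti hcard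
    refine milner_lym 𝒜 (by omega) ?_ (fun A hA => by have := hcard A hA; omega)
    intro A hA B hB hne hsub
    exact hne (hanti A hA B hB hsub)
  | succ d ih =>
    intro 𝒜 hint hanti hcard
    set k := (m + t + 1) / 2 with hkdef
    by_cases hkd : k ≤ d
    · exact ih 𝒜 hint hanti (fun A hA => by omega)
    push_neg at hkd
    set s := k - d - 1 with hs
    set 𝒜s := 𝒜.filter (fun A => A.card = s) with h𝒜s
    set ℬ := 𝒜.filter (fun A => ¬ A.card = s) ∪ ∂⁺ 𝒜s with hℬ
    have h𝒜s_sized : ∀ A ∈ 𝒜s, A.card = s := fun A hA => (mem_filter.1 hA).2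
    have hup_sized : ∀ B ∈ ∂⁺ 𝒜s, B.card = s + 1 := by
      intro B hB
      rw [mem_upShadow_iff] at hB
      obtain ⟨A, hA, a, ha, rfl⟩ := hB
      rw [card_insert_of_notMem ha, h𝒜s_sized A hA]
    have hsup : ∀ B ∈ ℬ, ∃ A ∈ 𝒜, A ⊆ B := by
      intro B hB
      rcases mem_union.1 hB with h | h
      · exact ⟨B, (mem_filter.1 h).1, Subset.rfl⟩
      · obtain ⟨A, hA, hAB⟩ := exists_subset_of_mem_upShadow h
        exact ⟨A, (mem_filter.1 hA).1, hAB⟩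
    have hintℬ : ∀ A ∈ ℬ, ∀ B ∈ ℬ, t ≤ (A ∩ B).card := by
      intro B1 hB1 B2 hB2
      obtain ⟨A1, hA1, h1⟩ := hsup B1 hB1
      obtain ⟨A2, hA2, h2⟩ := hsup B2 hB2
      exact (hint A1 hA1 A2 hA2).trans (card_le_card (inter_subset_inter h1 h2))
    have hantiℬ : ∀ A ∈ ℬ, ∀ B ∈ ℬ, A ⊆ B → A = B := by
      intro B1 hB1 B2 hB2 hsub
      rcases mem_union.1 hB1 with h1 | h1 <;> rcases mem_union.1 hB2 with h2 | h2
      · exact hanti B1 (mem_filter.1 h1).1 B2 (mem_filter.1 h2).1 hsub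
      · refine eq_of_subset_of_card_le hsub ?_
        rw [hup_sized B2 h2]
        have := hcard B1 (mem_filter.1 h1).1
        have := (mem_filter.1 h1).2
        omega
      · obtain ⟨A, hA, hAB⟩ := exists_subset_of_mem_upShadow h1
        have hAA := hanti A (mem_filter.1 hA).1 B2 (mem_filter.1 h2).1 (hAB.trans hsub)
        have h3 := h𝒜s_sized A hA
        have h4 := (mem_filter.1 h2).2
        rw [hAA] at h3
        exact absurd h3 h4
      · refine eq_of_subset_of_card_le hsub ?_
        rw [hup_sized B2 h2, hup_sized B1 h1]
    have hcardℬ : ∀ B ∈ ℬ, k - d ≤ B.card := by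
      intro B hB
      rcases mem_union.1 hB with h | h
      · have := hcard B (mem_filter.1 h).1
        have := (mem_filter.1 h).2
        omega
      · rw [hup_sized B h]
        omega
    have hdisj : Disjoint (𝒜.filter (fun A => ¬ A.card = s)) (∂⁺ 𝒜s) := by
      rw [disjoint_left]
      intro B hB1 hB2
      obtain ⟨A, hA, hAB⟩ := exists_subset_of_mem_upShadow hB2
      have hAA := hanti A (mem_filter.1 hA).1 B (mem_filter.1 hB1).1 hAB
      have h3 := h𝒜s_sized A hA
      have h4 := (mem_filter.1 hB1).2
      rw [hAA] at h3
      exact h4 h3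
    have hkat : 𝒜s.card ≤ (∂⁺ 𝒜s).card := by
      refine katona_up (t := t) 𝒜s h𝒜s_sized ?_ ?_
      · exact fun A hA B hB => hint A (mem_filter.1 hA).1 B (mem_filter.1 hB).1
      · omega
    have hsplit : 𝒜.card = (𝒜.filter (fun A => ¬ A.card = s)).card + 𝒜s.card := by
      have h := card_filter_add_card_filter_not (p := fun A => A.card = s) (s := 𝒜)
      rw [← h𝒜s] at h
      omega
    have hℬcard : 𝒜.card ≤ ℬ.card := by
      rw [hℬ, card_union_of_disjoint hdisj, hsplit]
      omega
    exact hℬcard.trans (ih ℬ hintℬ hantiℬ hcardℬ)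

theorem milner_intersecting_antichain (m t α : ℕ)
    (S : Fin α → Finset (Fin m))
    (hantichain : ∀ i j, i ≠ j → ¬ S i ⊆ S j)
    (hintersect : ∀ i j, t ≤ ((S i) ∩ (S j)).card) :
    α ≤ Nat.choose m ((m + t + 1) / 2) := by
  classical
  set 𝒜 := Finset.univ.image S with h𝒜
  have hSinj : Function.Injective S := by
    intro i j h
    by_contra hne
    exact hantichain i j hne (h ▸ Finset.Subset.refl _)
  have hcard : 𝒜.card = α := by
    rw [h𝒜, card_image_of_injective _ hSinj, card_univ, Fintype.card_fin]
  have hint : ∀ A ∈ 𝒜, ∀ B ∈ 𝒜, t ≤ (A ∩ B).card := by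
    intro A hA B hB
    rw [h𝒜, mem_image] at hA hB
    obtain ⟨i, _, rfl⟩ := hA
    obtain ⟨j, _, rfl⟩ := hB
    exact hintersect i j
  have hanti : ∀ A ∈ 𝒜, ∀ B ∈ 𝒜, A ⊆ B → A = B := by
    intro A hA B hB hsub
    rw [h𝒜, mem_image] at hA hB
    obtain ⟨i, _, rfl⟩ := hA
    obtain ⟨j, _, rfl⟩ := hB
    rcases eq_or_ne i j with rfl | hne
    · rfl
    · exact absurd hsub (hantichain i j hne)
  have := milner_family m t ((m + t + 1) / 2) 𝒜 hint hanti (fun A hA => by omega)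
  omega
end

section
/- Let m be divisible by 8, r = m/2, t = m/8, and consider the Kneser-type graph K(m,r,t) whose vertices are the r-subsets of an m-set, with two subsets adjacent iff their intersection has size < t. Assign to each vertex S the unit vector in ℝ^m whose coordinates are 1/√m on elements of S and -1/√m elsewhere. Then for any two adjacent vertices S_i, S_j, the inner product of their vectors is at most -1/2; i.e., K(m,r,t) is vector 3-colorable. -/
/-!
Coordinatewise, `x j * y j` is `1/m` where the sign patterns of `S` and `T` agree and `-1/m` on
`S ∆ T`, so `⟪x, y⟫ = 1 - 2|S ∆ T|/m`. As `|S ∆ T| = |S| + |T| - 2|S ∩ T|`, a small intersection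
forces `|S ∆ T| ≥ 3m/4`.
-/

open scoped RealInnerProductSpace symmDiff
open Finset

theorem Finset.card_symmDiff_add_two_mul_card_inter {α : Type*} [DecidableEq α] (S T : Finset α) :
    #(S ∆ T) + 2 * #(S ∩ T) = #S + #T := by
  have hS := card_sdiff_add_card_inter S T
  have hT := card_sdiff_add_card_inter T S
  rw [symmDiff_def, sup_eq_union, card_union_of_disjoint disjoint_sdiff_sdiff, inter_comm T] at *
  omega

theorem real_inner_eq_of_sign_pattern {ι : Type*} [Fintype ι] [DecidableEq ι]
    (S T : Finset ι) (c : ℝ) (x y : EuclideanSpace ℝ ι)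
    (hx : ∀ j, x j = if j ∈ S then c else -c) (hy : ∀ j, y j = if j ∈ T then c else -c) :
    ⟪x, y⟫ = c ^ 2 * (Fintype.card ι - 2 * #(S ∆ T)) := by
  have hterm : ∀ j, y j * x j = c ^ 2 - 2 * c ^ 2 * (if j ∈ S ∆ T then 1 else 0) := by
    intro j
    simp only [hx, hy, mem_symmDiff]
    split_ifs <;> simp_all <;> ring
  simp only [PiLp.inner_apply, RCLike.inner_apply, conj_trivial, hterm, sum_sub_distrib,
    ← mul_sum, sum_boole, filter_mem_eq_inter, univ_inter, sum_const, card_univ, nsmul_eq_mul]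
  ring

theorem real_inner_eq_one_sub_of_sign_pattern {ι : Type*} [Fintype ι] [Nonempty ι]
    [DecidableEq ι] (S T : Finset ι) (x y : EuclideanSpace ℝ ι)
    (hx : ∀ j, x j = if j ∈ S then 1 / √(Fintype.card ι) else -(1 / √(Fintype.card ι)))
    (hy : ∀ j, y j = if j ∈ T then 1 / √(Fintype.card ι) else -(1 / √(Fintype.card ι))) :
    ⟪x, y⟫ = 1 - 2 * #(S ∆ T) / Fintype.card ι := by
  have hpos : (0 : ℝ) < Fintype.card ι := by exact_mod_cast Fintype.card_pos
  rw [real_inner_eq_of_sign_pattern S T _ x y hx hy, div_pow, Real.sq_sqrt hpos.le]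
  field_simp

theorem kneser_graph_vector_three_colorable_general (m : ℕ)
    (S T : Finset (Fin m)) (hS : S.card = m / 2) (hT : T.card = m / 2)
    (hadj : (S ∩ T).card < m / 8)
    (x y : EuclideanSpace ℝ (Fin m))
    (hx : ∀ j, x j = if j ∈ S then 1 / Real.sqrt m else -(1 / Real.sqrt m))
    (hy : ∀ j, y j = if j ∈ T then 1 / Real.sqrt m else -(1 / Real.sqrt m)) :
    ⟪x, y⟫ ≤ -1 / 2 := by
  have hm : 0 < m := by omega
  have : Nonempty (Fin m) := ⟨⟨0, hm⟩⟩
  have hcard := card_symmDiff_add_two_mul_card_inter S T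
  have hsymm : 3 * m ≤ 4 * #(S ∆ T) := by omega
  have hinner := real_inner_eq_one_sub_of_sign_pattern S T x y
    (by simpa using hx) (by simpa using hy)
  have hsymmR : (3 * m : ℝ) ≤ 4 * #(S ∆ T) := by exact_mod_cast hsymm
  have hratio : 3 / 2 ≤ 2 * (#(S ∆ T) : ℝ) / m := by
    rw [le_div_iff₀ (by positivity)]
    linarith
  rw [hinner, Fintype.card_fin]
  linarith

theorem kneser_graph_vector_three_colorable (m : ℕ) (hm : 8 ∣ m) (hm0 : 0 < m)
    (S T : Finset (Fin m)) (hS : S.card = m / 2) (hT : T.card = m / 2)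
    (hadj : (S ∩ T).card < m / 8)
    (x y : EuclideanSpace ℝ (Fin m))
    (hx : ∀ j, x j = if j ∈ S then 1 / Real.sqrt m else -(1 / Real.sqrt m))
    (hy : ∀ j, y j = if j ∈ T then 1 / Real.sqrt m else -(1 / Real.sqrt m)) :
    ⟪x, y⟫ ≤ -1 / 2 :=
  kneser_graph_vector_three_colorable_general m S T hS hT hadj x y hx hy
end
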